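/- arXiv:1110.0168 — 2 statements merged into one kernel-verified Lean document; each statement's English description precedes it below -/
import Mathlib

section
/- A piecewise constant tensor field σ : 𝒯 → ℝ^{2×2} is divergence free, i.e. Σ_{T∈𝒯} |T| σ(T) : ∂_T u = 0 for all u ∈ 𝒰₀, if and only if there exists ψ ∈ N1(𝒯)² such that σ(T) = (∂_T ψ) J for all T ∈ 𝒯, where J is the rotation of ℝ² by π/2. -/
open Real
open scoped BigOperators Classical ENNReal

noncomputable section

namespace AC

/-- The plane `ℝ²` with the Euclidean norm. -/
abbrev E2 := EuclideanSpace ℝ (Fin 2)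

/-- `2 × 2` real matrices. -/
abbrev Mat2 := Matrix (Fin 2) (Fin 2) ℝ

def toE2 (v : Fin 2 → ℝ) : E2 := WithLp.toLp 2 v

/-- The lattice directions `a_j = Q6^(j-1) a_1`, `Q6` the rotation by `π/3`. -/
def avec (j : ℤ) : E2 :=
  toE2 ![Real.cos (((j : ℝ) - 1) * (Real.pi / 3)), Real.sin (((j : ℝ) - 1) * (Real.pi / 3))]

/-- The volume `Ω₀ = √3/2` of a primitive cell. -/
def Om0 : ℝ := Real.sqrt 3 / 2

/-- `𝐚 = (a_1, …, a_6)`. -/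
def aFam : Fin 6 → E2 := fun j => avec ((j : ℕ) + 1)

/-- Matrix-vector multiplication on `E2`. -/
def mvec (F : Mat2) (v : E2) : E2 := toE2 fun i => ∑ k, F i k * v k

/-- `F𝐚 = (F a_1, …, F a_6)`. -/
def Famat (F : Mat2) : Fin 6 → E2 := fun j => mvec F (aFam j)

/-- Lattice coordinates (w.r.t. the basis `a_1, a_2`) of `a_j` (indices mod 6). -/
def ed (j : ℤ) : ℤ × ℤ :=
  match (j % 6).toNat with
  | 1 => (1, 0)
  | 2 => (0, 1)
  | 3 => (-1, 1)
  | 4 => (-1, 0)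
  | 5 => (0, -1)
  | _ => (1, -1)

/-- The lattice point `n₁ a₁ + n₂ a₂`; `ℒ = emb '' (ℤ × ℤ)`. -/
def emb (n : ℤ × ℤ) : E2 := (n.1 : ℝ) • avec 1 + (n.2 : ℝ) • avec 2

/-- Forward finite difference `D_j v(x) = v(x + a_j) - v(x)` in lattice coordinates. -/
def Dd (j : ℤ) (v : ℤ × ℤ → E2) (n : ℤ × ℤ) : E2 := v (n + ed j) - v n

/-- `Dv(x) = (D_1 v(x), …, D_6 v(x))`. -/
def Dfam (y : ℤ × ℤ → E2) (n : ℤ × ℤ) : Fin 6 → E2 := fun j => Dd ((j : ℕ) + 1) y n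

/-- Euclidean dot product. -/
def dotE (v w : E2) : ℝ := ∑ i, v i * w i

/-- Frobenius inner product `A : B`. -/
def frobI (A B : Mat2) : ℝ := ∑ i, ∑ k, A i k * B i k

/-- Frobenius norm. -/
def frobN (A : Mat2) : ℝ := Real.sqrt (∑ i, ∑ k, (A i k) ^ 2)

/-- Outer product `v ⊗ w`. -/
def outer (v w : E2) : Mat2 := fun i k => v i * w k

/-- The element of `(ℝ²)⁶` with `k`-th standard basis vector in slot `j` and `0` elsewhere. -/
def unitv (j : Fin 6) (k : Fin 2) : Fin 6 → E2 := fun i => if i = j then toE2 (Pi.single k 1) else 0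

/-- Partial gradient `∂_j V(g) ∈ ℝ²` of `V` with respect to its `j`-th argument. -/
def pd (V : (Fin 6 → E2) → ℝ) (j : Fin 6) (g : Fin 6 → E2) : E2 :=
  toE2 fun k => deriv (fun t : ℝ => V (g + t • unitv j k)) 0

/-- Second partial derivative `∂_{ij} V(g) ∈ ℝ^{2×2}`. -/
def pd2 (V : (Fin 6 → E2) → ℝ) (i j : Fin 6) (g : Fin 6 → E2) : Mat2 :=
  fun k l => deriv (fun t : ℝ => pd V j (g + t • unitv i k) l) 0

/-- Third partial derivative `∂_{ijk} V(g)`. -/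
def pd3 (V : (Fin 6 → E2) → ℝ) (i j k : Fin 6) (g : Fin 6 → E2) : Fin 2 → Fin 2 → Fin 2 → ℝ :=
  fun p q r => deriv (fun t : ℝ => pd2 V j k (g + t • unitv i p) q r) 0

/-- Operator norm of a matrix viewed as a bilinear form on `ℝ²`. -/
def matOpNorm (A : Mat2) : ℝ :=
  sSup {r : ℝ | ∃ h1 h2 : E2, ‖h1‖ = 1 ∧ ‖h2‖ = 1 ∧ r = ∑ k, ∑ l, A k l * h1 k * h2 l}

/-- Norm of a trilinear form on `ℝ²`. -/
def t3norm (B : Fin 2 → Fin 2 → Fin 2 → ℝ) : ℝ :=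
  sSup {r : ℝ | ∃ h1 h2 h3 : E2, ‖h1‖ = 1 ∧ ‖h2‖ = 1 ∧ ‖h3‖ = 1 ∧
    r = ∑ p, ∑ q, ∑ s, B p q s * h1 p * h2 q * h3 s}

/-- `M₂ = Σ_{i,j} sup_g ‖∂_{ij}V(g)‖`. -/
def M2 (V : (Fin 6 → E2) → ℝ) : ℝ :=
  ∑ i : Fin 6, ∑ j : Fin 6, ⨆ g : Fin 6 → E2, matOpNorm (pd2 V i j g)

/-- `M₃ = Σ_{i,j,k} sup_g ‖∂_{ijk}V(g)‖`. -/
def M3 (V : (Fin 6 → E2) → ℝ) : ℝ :=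
  ∑ i : Fin 6, ∑ j : Fin 6, ∑ k : Fin 6, ⨆ g : Fin 6 → E2, t3norm (pd3 V i j k g)

/-- Finiteness of `M₂`. -/
def M2fin (V : (Fin 6 → E2) → ℝ) : Prop :=
  ∀ i j : Fin 6, BddAbove (Set.range fun g : Fin 6 → E2 => matOpNorm (pd2 V i j g))

/-- Finiteness of `M₃`. -/
def M3fin (V : (Fin 6 → E2) → ℝ) : Prop :=
  ∀ i j k : Fin 6, BddAbove (Set.range fun g : Fin 6 → E2 => t3norm (pd3 V i j k g))

/-- The class `𝒱`: `C³` potentials with the point symmetry `V((-g_{j+3})_j) = V(g)`. -/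
def memV (V : (Fin 6 → E2) → ℝ) : Prop :=
  ContDiff ℝ 3 V ∧ ∀ g : Fin 6 → E2, V (fun j => -g (j + 3)) = V g

/-- Cauchy–Born stored energy `W(F) = V(F𝐚)/Ω₀`. -/
def Wf (V : (Fin 6 → E2) → ℝ) (F : Mat2) : ℝ := V (Famat F) / Om0

/-- `∂W(F) ∈ ℝ^{2×2}`. -/
def DW (V : (Fin 6 → E2) → ℝ) (F : Mat2) : Mat2 :=
  fun i k => deriv (fun t : ℝ => Wf V (F + t • Matrix.single i k 1)) 0

/-- The matrix `G` with `G b₁ = v₁`, `G b₂ = v₂` (for linearly independent `b₁, b₂`). -/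
def solve2 (b1 b2 v1 v2 : E2) : Mat2 := fun i k =>
  (if k = 0 then v1 i * b2 1 - v2 i * b1 1 else v2 i * b1 0 - v1 i * b2 0) /
    (b1 0 * b2 1 - b1 1 * b2 0)

/-- Triangles of the canonical triangulation `𝒯`: `(n, true)` is the upward triangle
with vertices `n, n+a₁, n+a₂`, and `(n, false)` the downward triangle with vertices
`n, n+a₁, n+a₆` (in lattice coordinates). -/
abbrev Tri := (ℤ × ℤ) × Bool

/-- The gradient `∂_T y` of the piecewise affine interpolant of `y` on `T`. -/
def triGrad (y : ℤ × ℤ → E2) (T : Tri) : Mat2 :=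
  if T.2 then solve2 (avec 1) (avec 2) (Dd 1 y T.1) (Dd 2 y T.1)
  else solve2 (avec 1) (avec 6) (Dd 1 y T.1) (Dd 6 y T.1)

/-- The vertices `T ∩ ℒ` of a triangle, in lattice coordinates. -/
def triVerts (T : Tri) : Finset (ℤ × ℤ) :=
  if T.2 then {T.1, T.1 + (1, 0), T.1 + (0, 1)} else {T.1, T.1 + (1, 0), T.1 + (1, -1)}

/-- `x_{T,j}`: the unique lattice point with `x_{T,j}, x_{T,j} + a_{j+1} ∈ T`
(here `j : Fin 6` labels the direction `a_{j+1}`). -/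
def xT (T : Tri) (j : Fin 6) : ℤ × ℤ :=
  T.1 + (if T.2 then
    (match (j : ℕ) with
     | 0 => ((0 : ℤ), (0 : ℤ)) | 1 => (0, 0) | 2 => (1, 0) | 3 => (1, 0) | 4 => (0, 1) | _ => (0, 1))
  else
    (match (j : ℕ) with
     | 0 => ((0 : ℤ), (0 : ℤ)) | 1 => (1, -1) | 2 => (1, -1) | 3 => (1, 0) | 4 => (1, 0) | _ => (0, 0)))

/-- The neighbouring triangle `T_j` of `T` sharing the edge with direction `a_{j+1}`. -/
def nbr (T : Tri) (j : Fin 6) : Tri :=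
  if T.2 then
    (T.1 + (match (j : ℕ) % 3 with | 0 => ((0 : ℤ), (0 : ℤ)) | 1 => (-1, 1) | _ => (0, 1)), false)
  else
    (T.1 + (match (j : ℕ) % 3 with | 0 => ((0 : ℤ), (0 : ℤ)) | 1 => (1, -1) | _ => (0, -1)), true)

/-- The triangle `T_{x,j} = conv{x, x + a_j, x + a_{j+1}}` (index `j` mod 6). -/
def Txj (x : ℤ × ℤ) (j : ℤ) : Tri :=
  match (j % 6).toNat with
  | 1 => (x, true)
  | 2 => (x + (-1, 1), false)
  | 3 => (x + (-1, 0), true)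
  | 4 => (x + (-1, 0), false)
  | 5 => (x + (0, -1), true)
  | _ => (x, false)

/-- The Cauchy–Born site potential `V^c(g) = (Ω₀/6) Σ_j W(∂_{T_{x,j}} y)` as a function
of the six differences `g = Dy(x)`. -/
def Vc (V : (Fin 6 → E2) → ℝ) (g : Fin 6 → E2) : ℝ :=
  Om0 / 6 * ∑ j : Fin 6, Wf V (solve2 (avec ((j : ℕ) + 1)) (avec ((j : ℕ) + 2)) (g j) (g (j + 1)))

/-- The atomistic stress `Σa(y;T)`. -/
def Sa (V : (Fin 6 → E2) → ℝ) (y : ℤ × ℤ → E2) (T : Tri) : Mat2 :=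
  Om0⁻¹ • ∑ j : Fin 6, outer (pd V j (Dfam y (xT T j))) (aFam j)

/-- The continuum stress `Σc¹(y;T) = ∂W(∂_T y)`. -/
def Sc1 (V : (Fin 6 → E2) → ℝ) (y : ℤ × ℤ → E2) (T : Tri) : Mat2 := DW V (triGrad y T)

/-- The continuum stress `Σc²(y;T)`. -/
def Sc2 (V : (Fin 6 → E2) → ℝ) (y : ℤ × ℤ → E2) (T : Tri) : Mat2 :=
  Om0⁻¹ • ∑ j : Fin 6, (2 : ℝ)⁻¹ •
    outer (pd V j (Famat (triGrad y T)) + pd V j (Famat (triGrad y (nbr T j)))) (aFam j)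

/-- The continuum stress `Σc³(y;T)`. -/
def Sc3 (V : (Fin 6 → E2) → ℝ) (y : ℤ × ℤ → E2) (T : Tri) : Mat2 :=
  Om0⁻¹ • ∑ j : Fin 6, outer (pd (Vc V) j (Dfam y (xT T j))) (aFam j)

/-- The interface region `ℐ` determined by the atomistic region `𝒜`. -/
def interf (A : Set (ℤ × ℤ)) : Set (ℤ × ℤ) :=
  {x | x ∉ A ∧ ∃ j : Fin 6, x + ed ((j : ℕ) + 1) ∈ A}

/-- The continuum region `𝒞 = ℒ ∖ (𝒜 ∪ ℐ)`. -/
def contR (A : Set (ℤ × ℤ)) : Set (ℤ × ℤ) := {x | x ∉ A ∧ x ∉ interf A}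

/-- The reconstructed interface potential `V^i(g) = V((Σ_i C_{j,i} g_i)_j)`. -/
def Vi (V : (Fin 6 → E2) → ℝ) (Cp : Fin 6 → Fin 6 → ℝ) (g : Fin 6 → E2) : ℝ :=
  V fun j => ∑ i : Fin 6, Cp j i • g i

/-- The hybrid site potential `V^ac_x`. -/
def Vac (V : (Fin 6 → E2) → ℝ) (C : ℤ × ℤ → Fin 6 → Fin 6 → ℝ) (A : Set (ℤ × ℤ))
    (x : ℤ × ℤ) : (Fin 6 → E2) → ℝ :=
  if x ∈ A then V else if x ∈ interf A then Vi V (C x) else Vc V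

/-- First variation `⟨δE_a(y), u⟩` of the atomistic energy. -/
def dEa (V : (Fin 6 → E2) → ℝ) (y u : ℤ × ℤ → E2) : ℝ :=
  ∑ᶠ n : ℤ × ℤ, ∑ j : Fin 6, dotE (pd V j (Dfam y n)) (Dfam u n j)

/-- First variation `⟨δE_c(y), u⟩` of the Cauchy–Born energy. -/
def dEc (V : (Fin 6 → E2) → ℝ) (y u : ℤ × ℤ → E2) : ℝ :=
  ∑ᶠ T : Tri, Om0 / 2 * frobI (DW V (triGrad y T)) (triGrad u T)

/-- First variation `⟨δE_ac(y), u⟩` of the a/c coupling energy. -/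
def dEac (V : (Fin 6 → E2) → ℝ) (C : ℤ × ℤ → Fin 6 → Fin 6 → ℝ) (A : Set (ℤ × ℤ))
    (y u : ℤ × ℤ → E2) : ℝ :=
  ∑ᶠ n : ℤ × ℤ, ∑ i : Fin 6, dotE (pd (Vac V C A n) i (Dfam y n)) (Dfam u n i)

/-- The a/c stress `Σac(y;T)`. -/
def Sac (V : (Fin 6 → E2) → ℝ) (C : ℤ × ℤ → Fin 6 → Fin 6 → ℝ) (A : Set (ℤ × ℤ))
    (y : ℤ × ℤ → E2) (T : Tri) : Mat2 :=
  Om0⁻¹ • ∑ j : Fin 6, outer (pd (Vac V C A (xT T j)) j (Dfam y (xT T j))) (aFam j)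

/-- `u ∈ 𝒰₀`: finitely supported displacement. -/
def FinSupp (u : ℤ × ℤ → E2) : Prop := (Function.support u).Finite

/-- `y ∈ 𝒴₀`: deformation with `y - id` finitely supported. -/
def inY0 (y : ℤ × ℤ → E2) : Prop := (Function.support fun n => y n - emb n).Finite

/-- The homogeneous deformation `y_F(x) = Fx`. -/
def yhom (F : Mat2) : ℤ × ℤ → E2 := fun n => mvec F (emb n)

/-- One-sidedness: `C_{j,i} = 0` unless `i ∈ {j-1, j, j+1}` (mod 6). -/
def oneSided (Cp : Fin 6 → Fin 6 → ℝ) : Prop :=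
  ∀ j i : Fin 6, i ≠ j - 1 → i ≠ j → i ≠ j + 1 → Cp j i = 0

/-- Local energy consistency: `C_{j,j-1} = C_{j,j+1} = 1 - C_{j,j}`. -/
def eCons (Cp : Fin 6 → Fin 6 → ℝ) : Prop :=
  ∀ j : Fin 6, Cp j (j - 1) = 1 - Cp j j ∧ Cp j (j + 1) = 1 - Cp j j

/-- The coefficients corresponding to the atomistic site potential (`C_{x,j} = 1`). -/
def atomC : Fin 6 → Fin 6 → ℝ := fun j i => if i = j then 1 else 0

/-- The coefficients corresponding to the Cauchy–Born site potential (`C_{x,j} = 2/3`). -/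
def cbC : Fin 6 → Fin 6 → ℝ := fun j i =>
  if i = j then 2 / 3 else if i = j - 1 ∨ i = j + 1 then 1 / 3 else 0

/-- The negative force `-f_ac(x; y_F) = Σ_{j,i} (C_{x-a_i,j,i} - C_{x,j,i}) ∂_j V(F𝐚)`. -/
def forceSum (C : ℤ × ℤ → Fin 6 → Fin 6 → ℝ) (V : (Fin 6 → E2) → ℝ) (F : Mat2)
    (x : ℤ × ℤ) : E2 :=
  ∑ j : Fin 6, ∑ i : Fin 6, (C (x - ed ((i : ℕ) + 1)) j i - C x j i) • pd V j (Famat F)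

/-- The force consistency condition (5.2) on the coefficients. -/
def fCons (C : ℤ × ℤ → Fin 6 → Fin 6 → ℝ) : Prop :=
  ∀ j : Fin 6, (j : ℕ) < 3 → ∀ x : ℤ × ℤ,
    ∑ i : Fin 6, (C (x - ed ((i : ℕ) + 1)) j i - C (x - ed ((i : ℕ) + 1)) (j + 3) i
      - C x j i + C x (j + 3) i) = 0

/-- `|D²y(x)| = max_{i,j} |D_i D_j y(x)|`. -/
def D2n (y : ℤ × ℤ → E2) (n : ℤ × ℤ) : ℝ :=
  ⨆ i : Fin 6, ⨆ j : Fin 6, ‖Dd ((i : ℕ) + 1) (Dd ((j : ℕ) + 1) y) n‖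

/-- `|D³y(x)| = max_{i,j,k} |D_i D_j D_k y(x)|`. -/
def D3n (y : ℤ × ℤ → E2) (n : ℤ × ℤ) : ℝ :=
  ⨆ i : Fin 6, ⨆ j : Fin 6, ⨆ k : Fin 6,
    ‖Dd ((i : ℕ) + 1) (Dd ((j : ℕ) + 1) (Dd ((k : ℕ) + 1) y)) n‖

/-- `ℓ^p` norm of a lattice function over a subset `S ⊆ ℒ`. -/
def lpNormS (p : ℝ≥0∞) (f : ℤ × ℤ → ℝ) (S : Set (ℤ × ℤ)) : ℝ :=
  if p = ⊤ then ⨆ x : S, |f x| else (∑ᶠ x ∈ S, |f x| ^ p.toReal) ^ (1 / p.toReal)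

/-- `‖∂u‖_{L^q}` for the piecewise affine interpolant. -/
def gradLp (q : ℝ≥0∞) (u : ℤ × ℤ → E2) : ℝ :=
  if q = ⊤ then ⨆ T : Tri, frobN (triGrad u T)
  else (∑ᶠ T : Tri, Om0 / 2 * frobN (triGrad u T) ^ q.toReal) ^ (1 / q.toReal)

/-- `𝒯_𝒜`: triangles with `T ∩ (ℐ ∪ 𝒞) = ∅`. -/
def TA (A : Set (ℤ × ℤ)) : Set Tri := {T | ∀ n ∈ triVerts T, n ∉ interf A ∧ n ∉ contR A}

/-- `𝒯_𝒞`: triangles with `T ∩ (ℐ ∪ 𝒜) = ∅`. -/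
def TC (A : Set (ℤ × ℤ)) : Set Tri := {T | ∀ n ∈ triVerts T, n ∉ interf A ∧ n ∉ A}

/-- `𝒯_ℐ = 𝒯 ∖ (𝒯_𝒜 ∪ 𝒯_𝒞)`. -/
def TI (A : Set (ℤ × ℤ)) : Set Tri := {T | T ∉ TA A ∧ T ∉ TC A}

/-- The midpoint of the edge `(x, x + a_j)`. -/
def edgeMid (x : ℤ × ℤ) (j : ℤ) : E2 := emb x + (2 : ℝ)⁻¹ • avec j

/-- The edge `(x, x+a_j)` belongs to `𝔉_𝒜` (it lies in a triangle of `𝒯_𝒜`). -/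
def edgeInA (A : Set (ℤ × ℤ)) (x : ℤ × ℤ) (j : ℤ) : Prop :=
  Txj x j ∈ TA A ∨ Txj x (j - 1) ∈ TA A

/-- The edge `(x, x+a_j)` belongs to `𝔉_𝒞`. -/
def edgeInC (A : Set (ℤ × ℤ)) (x : ℤ × ℤ) (j : ℤ) : Prop :=
  Txj x j ∈ TC A ∨ Txj x (j - 1) ∈ TC A

/-- Rotation by `π/2`. -/
def Jmat : Mat2 := !![0, -1; 1, 0]

/-- Midpoint continuity of a piecewise affine field: membership in `N1(𝒯)²`. -/
def midCont (ψ : Tri → E2 → E2) : Prop :=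
  ∀ (x : ℤ × ℤ) (j : ℤ), ψ (Txj x j) (edgeMid x j) = ψ (Txj x (j - 1)) (edgeMid x j)

/-- `ψ` is piecewise affine with Jacobian `G T` on each triangle `T`. -/
def affWith (ψ : Tri → E2 → E2) (G : Tri → Mat2) : Prop :=
  ∀ (T : Tri) (z w : E2), ψ T z - ψ T w = mvec (G T) (z - w)

/-- Assumption 4.1: every interface atom has exactly two interface neighbours and
at least one continuum neighbour. -/
def InterfaceOK (A : Set (ℤ × ℤ)) : Prop :=
  ∀ x ∈ interf A,
    ({j : Fin 6 | x + ed ((j : ℕ) + 1) ∈ interf A}).ncard = 2 ∧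
    ∃ j : Fin 6, x + ed ((j : ℕ) + 1) ∈ contR A

/-- The patch test: local energy consistency and local force consistency for all `V ∈ 𝒱`. -/
def PatchTest (C : ℤ × ℤ → Fin 6 → Fin 6 → ℝ) (A : Set (ℤ × ℤ)) : Prop :=
  (∀ V, memV V → ∀ F : Mat2, ∀ x ∈ interf A, Vi V (C x) (Famat F) = V (Famat F)) ∧
  (∀ V, memV V → ∀ F : Mat2, ∀ u, FinSupp u → dEac V C A (yhom F) u = 0)

/-- The closed triangle `T ⊆ ℝ²`. -/
def triSet (T : Tri) : Set E2 :=
  convexHull ℝ {emb T.1, emb (T.1 + (1, 0)), emb (T.1 + (if T.2 then ((0 : ℤ), (1 : ℤ)) else (1, -1)))}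

/-- The closed edge `[x, x + a_j] ⊆ ℝ²`. -/
def edgeSeg (x : ℤ × ℤ) (j : ℤ) : Set E2 := segment ℝ (emb x) (emb (x + ed j))

/-- The atomistic region of the flat interface: `{x ∈ ℒ : x₂ < 0}`. -/
def flatA : Set (ℤ × ℤ) := {n | emb n 1 < 0}

/-- The extended interface region `ℐ^ext = {x ∈ ℒ : dist(x, ℐ) ≤ 1}`. -/
def Iext (A : Set (ℤ × ℤ)) : Set (ℤ × ℤ) := {x | ∃ z ∈ interf A, ‖emb x - emb z‖ ≤ 1}

/-- Embedding `Fin 3 → Fin 6`. -/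
def jlift (j : Fin 3) : Fin 6 := ⟨(j : ℕ), by omega⟩

end AC

open scoped RealInnerProductSpace Matrix

section DiscretePotential

variable {M : Type*} [AddCommGroup M]

def intPrimitive (h : ℤ → M) (k : ℤ) : M :=
  Int.inductionOn' (motive := fun _ => M) k 0 0 (fun k _ g => g + h k) (fun k _ g => g - h (k - 1))

@[simp]
lemma intPrimitive_zero (h : ℤ → M) : intPrimitive h 0 = 0 :=
  Int.inductionOn'_self

@[simp]
lemma intPrimitive_add_one (h : ℤ → M) (k : ℤ) :
    intPrimitive h (k + 1) = intPrimitive h k + h k := by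
  rcases le_or_gt 0 k with hk | hk
  · exact Int.inductionOn'_add_one hk
  · have h' : intPrimitive h (k + 1 - 1) = intPrimitive h (k + 1) - h (k + 1 - 1) :=
      Int.inductionOn'_sub_one (by omega)
    simp only [add_sub_cancel_right] at h'
    rw [h', sub_add_cancel]

@[simp]
lemma intPrimitive_sub_one (h : ℤ → M) (k : ℤ) :
    intPrimitive h (k - 1) = intPrimitive h k - h (k - 1) := by
  rw [eq_sub_iff_add_eq, ← intPrimitive_add_one, sub_add_cancel]

theorem exists_potential_of_closed (P Q : ℤ × ℤ → M)
    (hPQ : ∀ n, P n + Q (n + (1, 0)) = Q n + P (n + (0, 1))) :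
    ∃ f : ℤ × ℤ → M, (∀ n, f (n + (1, 0)) - f n = P n) ∧ ∀ n, f (n + (0, 1)) - f n = Q n := by
  refine ⟨fun n => intPrimitive (fun a => P (a, 0)) n.1 + intPrimitive (fun b => Q (n.1, b)) n.2,
    fun ⟨a, b⟩ => ?_, fun ⟨a, b⟩ => by simp⟩
  induction b using Int.induction_on with
  | zero => simp
  | succ b ih =>
    have := hPQ (a, b)
    simp only [Prod.mk_add_mk, add_zero, intPrimitive_add_one] at this ih ⊢
    linear_combination (norm := abel) ih + this
  | pred b ih =>
    have := hPQ (a, -b - 1)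
    simp only [Prod.mk_add_mk, add_zero, sub_add_cancel, intPrimitive_sub_one] at this ih ⊢
    linear_combination (norm := abel) ih - this

theorem exists_potential_of_closed_addEquiv (e : ℤ × ℤ ≃+ ℤ × ℤ) (P Q : ℤ × ℤ → M)
    (hPQ : ∀ n, P n + Q (n + e (1, 0)) = Q n + P (n + e (0, 1))) :
    ∃ f : ℤ × ℤ → M, (∀ n, f (n + e (1, 0)) - f n = P n) ∧ ∀ n, f (n + e (0, 1)) - f n = Q n := by
  obtain ⟨f, hf₁, hf₂⟩ := exists_potential_of_closed (P ∘ e) (Q ∘ e) fun n => by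
    simpa only [Function.comp_apply, map_add] using hPQ (e n)
  exact ⟨f ∘ e.symm, fun n => by simpa using hf₁ (e.symm n), fun n => by simpa using hf₂ (e.symm n)⟩

end DiscretePotential

lemma forall_of_residues_six {P : ℤ → Prop} (hP : ∀ {j k : ℤ}, j ≡ k [ZMOD 6] → P k → P j)
    (h : ∀ r, 0 ≤ r → r < 6 → P r) (j : ℤ) : P j :=
  hP (Int.mod_modEq j 6).symm
    (h _ (Int.emod_nonneg j (by norm_num)) (Int.emod_lt_of_pos j (by norm_num)))

namespace AC

lemma avec_add_three (j : ℤ) : avec (j + 3) = -avec j := by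
  have h : ((j : ℝ) + 3 - 1) * (π / 3) = ((j : ℝ) - 1) * (π / 3) + π := by ring
  ext i
  fin_cases i <;> simp [avec, toE2, h, Real.cos_add_pi, Real.sin_add_pi]

lemma avec_modEq {j k : ℤ} (h : j ≡ k [ZMOD 6]) : avec j = avec k := by
  obtain ⟨q, hq⟩ := Int.modEq_iff_dvd.mp h.symm
  have hθ : ((j : ℝ) - 1) * (π / 3) = ((k : ℝ) - 1) * (π / 3) + q * (2 * π) := by
    rw [show (j : ℝ) = k + 6 * q by exact_mod_cast (by omega : j = k + 6 * q)]; ring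
  ext i
  fin_cases i <;> simp [avec, toE2, hθ, Real.cos_add_int_mul_two_pi, Real.sin_add_int_mul_two_pi]

lemma avec_one : avec 1 = toE2 ![1, 0] := by
  ext i; fin_cases i <;> simp [avec, toE2]

lemma avec_two : avec 2 = toE2 ![1 / 2, √3 / 2] := by
  ext i; fin_cases i <;> norm_num [avec, toE2]

lemma avec_three : avec 3 = toE2 ![-(1 / 2), √3 / 2] := by
  have h : 2 * (π / 3) = π - π / 3 := by ring
  ext i; fin_cases i <;> norm_num [avec, toE2, h, Real.cos_pi_sub, Real.sin_pi_sub]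

lemma avec_four : avec 4 = -avec 1 := avec_add_three 1

lemma avec_five : avec 5 = -avec 2 := avec_add_three 2

lemma avec_six : avec 6 = -avec 3 := avec_add_three 3

lemma avec_zero : avec 0 = -avec 3 := by
  rw [← avec_six]; exact avec_modEq rfl

lemma ed_modEq {j k : ℤ} (h : j ≡ k [ZMOD 6]) : ed j = ed k := by
  unfold ed; rw [h]

lemma emb_add (m n : ℤ × ℤ) : emb (m + n) = emb m + emb n := by
  simp only [emb, Prod.fst_add, Prod.snd_add, Int.cast_add, add_smul]
  abel

lemma emb_ed (k : ℤ) : emb (ed k) = avec k := by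
  refine forall_of_residues_six (P := fun k => emb (ed k) = avec k)
    (fun h hk => by rw [ed_modEq h, avec_modEq h, hk]) (fun r h0 h6 => ?_) k
  interval_cases r <;> simp only [ed, Int.reduceMod, Int.reduceToNat] <;> ext i <;> fin_cases i <;>
    norm_num [emb, avec_zero, avec_one, avec_two, avec_three, avec_four, avec_five, toE2]

lemma edgeMid_modEq (x : ℤ × ℤ) {j k : ℤ} (h : j ≡ k [ZMOD 6]) : edgeMid x j = edgeMid x k := by
  rw [edgeMid, edgeMid, avec_modEq h]

lemma edgeMid_add_three (x : ℤ × ℤ) (j : ℤ) : edgeMid x (j + 3) = edgeMid (x + ed (j + 3)) j := by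
  simp only [edgeMid, emb_add, emb_ed, avec_add_three]
  module

lemma Txj_modEq (x : ℤ × ℤ) {j k : ℤ} (h : j ≡ k [ZMOD 6]) : Txj x j = Txj x k := by
  unfold Txj; rw [h]

lemma Txj_add_three (x : ℤ × ℤ) (j : ℤ) : Txj x (j + 3) = Txj (x + ed (j + 3)) (j - 1) := by
  refine forall_of_residues_six (P := fun j => ∀ x, Txj x (j + 3) = Txj (x + ed (j + 3)) (j - 1))
    (fun h hk x => by
      rw [Txj_modEq x (h.add_right 3), ed_modEq (h.add_right 3), Txj_modEq _ (h.sub_right 1), hk])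
    (fun r h0 h6 x => ?_) j x
  interval_cases r <;> simp [Txj, ed, add_assoc]

lemma Txj_add_two (x : ℤ × ℤ) (j : ℤ) : Txj x (j + 2) = Txj (x + ed (j + 3)) j := by
  refine forall_of_residues_six (P := fun j => ∀ x, Txj x (j + 2) = Txj (x + ed (j + 3)) j)
    (fun h hk x => by
      rw [Txj_modEq x (h.add_right 2), ed_modEq (h.add_right 3), Txj_modEq _ h, hk])
    (fun r h0 h6 x => ?_) j x
  interval_cases r <;> simp [Txj, ed, add_assoc]

lemma mvec_eq_toEuclideanLin (F : Mat2) (v : E2) : mvec F v = Matrix.toEuclideanLin F v := rfl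

lemma mvec_zero (F : Mat2) : mvec F 0 = 0 := by
  simp [mvec_eq_toEuclideanLin]

lemma mvec_sub_left (F F' : Mat2) (v : E2) : mvec (F - F') v = mvec F v - mvec F' v := by
  simp [mvec_eq_toEuclideanLin]

lemma mvec_sub_right (F : Mat2) (v w : E2) : mvec F (v - w) = mvec F v - mvec F w := by
  simp [mvec_eq_toEuclideanLin]

def MidContAt (ψ : Tri → E2 → E2) (x : ℤ × ℤ) (j : ℤ) : Prop :=
  ψ (Txj x j) (edgeMid x j) = ψ (Txj x (j - 1)) (edgeMid x j)

lemma midContAt_modEq (ψ : Tri → E2 → E2) (x : ℤ × ℤ) {j k : ℤ} (h : j ≡ k [ZMOD 6]) :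
    MidContAt ψ x j ↔ MidContAt ψ x k := by
  rw [MidContAt, MidContAt, Txj_modEq x h, Txj_modEq x (h.sub_right 1), edgeMid_modEq x h]

lemma midContAt_add_three (ψ : Tri → E2 → E2) (x : ℤ × ℤ) (j : ℤ) :
    MidContAt ψ x (j + 3) ↔ MidContAt ψ (x + ed (j + 3)) j := by
  rw [MidContAt, MidContAt, show j + 3 - 1 = j + 2 by ring, Txj_add_three, Txj_add_two,
    edgeMid_add_three, eq_comm]

lemma midCont_of_midContAt {ψ : Tri → E2 → E2}
    (h : ∀ x, MidContAt ψ x 1 ∧ MidContAt ψ x 2 ∧ MidContAt ψ x 3) : midCont ψ := by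
  intro x j
  refine forall_of_residues_six (P := fun j => ∀ x, MidContAt ψ x j)
    (fun hjk hk x => (midContAt_modEq ψ x hjk).mpr (hk x)) (fun r h0 h6 x => ?_) j x
  interval_cases r
  · exact (midContAt_modEq ψ x (by decide : (0 : ℤ) ≡ 3 + 3 [ZMOD 6])).mpr
      ((midContAt_add_three ψ x 3).mpr (h _).2.2)
  · exact (h x).1
  · exact (h x).2.1
  · exact (h x).2.2
  · exact (midContAt_add_three ψ x 1).mpr (h _).1
  · exact (midContAt_add_three ψ x 2).mpr (h _).2.1

def jump (G : Tri → Mat2) (x : ℤ × ℤ) (j : ℤ) : E2 :=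
  mvec (G (Txj x (j - 1)) - G (Txj x j)) (edgeMid x j)

lemma jump_modEq (G : Tri → Mat2) (x : ℤ × ℤ) {j k : ℤ} (h : j ≡ k [ZMOD 6]) :
    jump G x j = jump G x k := by
  rw [jump, jump, Txj_modEq x h, Txj_modEq x (h.sub_right 1), edgeMid_modEq x h]

lemma jump_add_three (G : Tri → Mat2) (x : ℤ × ℤ) (j : ℤ) :
    jump G x (j + 3) = -jump G (x + ed (j + 3)) j := by
  rw [jump, jump, show j + 3 - 1 = j + 2 by ring, Txj_add_three, Txj_add_two,
    edgeMid_add_three, ← neg_sub, mvec_eq_toEuclideanLin, map_neg, LinearMap.neg_apply,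
    mvec_eq_toEuclideanLin]

lemma midContAt_iff_sub_eq_jump {ψ : Tri → E2 → E2} {G : Tri → Mat2} (hψ : affWith ψ G)
    (x : ℤ × ℤ) (j : ℤ) :
    MidContAt ψ x j ↔ ψ (Txj x j) 0 - ψ (Txj x (j - 1)) 0 = jump G x j := by
  have hψ₀ : ∀ T z, ψ T z = ψ T 0 + mvec (G T) z := fun T z => by
    simpa [sub_eq_iff_eq_add'] using hψ T z 0
  rw [MidContAt, jump, mvec_sub_left, hψ₀ _ (edgeMid x j), hψ₀ (Txj x (j - 1))]
  constructor <;> intro h <;> linear_combination (norm := abel) h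

lemma sum_jump_eq_zero_of_midCont {ψ : Tri → E2 → E2} {G : Tri → Mat2} (hψ : affWith ψ G)
    (hmid : midCont ψ) (x : ℤ × ℤ) : ∑ j ∈ Finset.range 6, jump G x j = 0 := by
  set c : ℕ → E2 := fun j => ψ (Txj x ((j : ℤ) - 1)) 0
  have hc : ∀ j : ℕ, jump G x j = c (j + 1) - c j := fun j => by
    rw [← (midContAt_iff_sub_eq_jump hψ x j).mp (hmid x j)]
    simp [c]
  rw [Finset.sum_congr rfl fun j _ => hc j, Finset.sum_range_sub, sub_eq_zero]
  exact congrArg (ψ · 0) (Txj_modEq x (by decide))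

def skewEquiv : ℤ × ℤ ≃+ ℤ × ℤ where
  toFun n := (-n.1, n.1 - n.2)
  invFun n := (-n.1, -n.1 - n.2)
  left_inv n := by simp
  right_inv n := by simp
  map_add' m n := by simp only [Prod.fst_add, Prod.snd_add, neg_add, Prod.mk_add_mk]; ring_nf

lemma skewEquiv_one_zero : skewEquiv (1, 0) = (-1, 1) := rfl

lemma skewEquiv_zero_one : skewEquiv (0, 1) = (0, -1) := rfl

/- The witness is `ψ_T(z) = G_T z + c_T` with `c (n, true) = f n` and
`c (n, false) = f n - jump G n 1`. Continuity at the edges `[x, x + a₂]` and `[x, x + a₃]` then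
prescribes the differences of `f` along `(-1, 1)` and `(0, -1)`, and these prescriptions are
compatible because the hexagon sums of the jumps vanish. -/
theorem exists_affWith_midCont_of_sum_jump_eq_zero (G : Tri → Mat2)
    (hloop : ∀ x, ∑ j ∈ Finset.range 6, jump G x j = 0) :
    ∃ ψ : Tri → E2 → E2, affWith ψ G ∧ midCont ψ := by
  have hJ₄ : ∀ x, jump G x 4 = -jump G (x + (-1, 0)) 1 := fun x => jump_add_three G x 1
  have hJ₅ : ∀ x, jump G x 5 = -jump G (x + (0, -1)) 2 := fun x => jump_add_three G x 2
  have hJ₀ : ∀ x, jump G x 0 = -jump G (x + (1, -1)) 3 := fun x =>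
    (jump_modEq G x (by decide)).trans (jump_add_three G x 3)
  obtain ⟨f, hfP, hfQ⟩ := exists_potential_of_closed_addEquiv skewEquiv
    (fun n => jump G n 2 + jump G (n + (-1, 1)) 1) (fun n => jump G (n + (1, -1)) 3 - jump G n 1)
    fun n => by
      have hsum := hloop n
      simp only [Finset.sum_range_succ, Finset.sum_range_zero, zero_add, Nat.cast_ofNat,
        Nat.cast_zero, Nat.cast_one, hJ₀, hJ₄, hJ₅] at hsum
      simp only [skewEquiv_one_zero, skewEquiv_zero_one, add_assoc, Prod.mk_add_mk,
        Int.reduceAdd, Prod.mk_zero_zero, add_zero]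
      linear_combination (norm := abel) hsum
  set c : Tri → E2 := fun T => f T.1 - if T.2 then 0 else jump G T.1 1
  have hψ : affWith (fun T z => mvec (G T) z + c T) G := fun T z w => by simp [mvec_sub_right]
  refine ⟨_, hψ, midCont_of_midContAt fun x => ?_⟩
  simp only [midContAt_iff_sub_eq_jump hψ, mvec_zero, zero_add]
  refine ⟨show c (x, true) - c (x, false) = _ by simp [c], ?_, ?_⟩
  · show c (x + (-1, 1), false) - c (x, true) = _
    have := hfP x
    simp only [c, skewEquiv_one_zero, if_true, Bool.false_eq_true, if_false, sub_zero] at this ⊢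
    linear_combination (norm := abel) this
  · show c (x + (-1, 0), true) - c (x + (-1, 1), false) = _
    have := hfQ (x + (-1, 1))
    rw [skewEquiv_zero_one, add_assoc, add_assoc,
      show ((-1, 1) + (0, -1) : ℤ × ℤ) = (-1, 0) from rfl,
      show ((-1, 1) + (1, -1) : ℤ × ℤ) = 0 from rfl, add_zero] at this
    simp only [c, if_true, Bool.false_eq_true, if_false, sub_zero]
    linear_combination (norm := abel) this

def vertexOffset (k : Fin 3) (b : Bool) : ℤ × ℤ := ![0, (1, 0), if b then (0, 1) else (1, -1)] k

/- `|T| ∇φ` on `T = (n, b)`, for the hat function `φ` of the vertex `n + vertexOffset k b`. -/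
def scaledHatGrad (k : Fin 3) (b : Bool) : E2 :=
  toE2 ![![-(√3 / 4), √3 / 4, 0] k, (if b then 1 else -1) * ![-(1 / 4), -(1 / 4), 1 / 2] k]

lemma area_mul_frobI_triGrad (σ : Tri → Mat2) (u : ℤ × ℤ → E2) (T : Tri) :
    Om0 / 2 * frobI (σ T) (triGrad u T) =
      ∑ k, ⟪mvec (σ T) (scaledHatGrad k T.2), u (T.1 + vertexOffset k T.2)⟫ := by
  obtain ⟨n, b⟩ := T
  cases b <;>
  · simp [triGrad, solve2, frobI, Dd, ed, vertexOffset, scaledHatGrad, Om0, mvec, toE2,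
      Fin.sum_univ_two, Fin.sum_univ_three, avec_one, avec_two, avec_six, avec_three,
      PiLp.inner_apply]
    field_simp
    ring

def triShift (v : Bool → ℤ × ℤ) : Tri ≃ Tri where
  toFun T := (T.1 + v T.2, T.2)
  invFun T := (T.1 - v T.2, T.2)
  left_inv T := by simp
  right_inv T := by simp

section SummationByParts

variable {u : ℤ × ℤ → E2}

lemma hasFiniteSupport_inner_shift (F : Tri → E2) (v : Bool → ℤ × ℤ) (hu : FinSupp u) :
    Function.HasFiniteSupport fun T : Tri => ⟪F T, u (T.1 + v T.2)⟫ := by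
  refine ((hu.prod Set.finite_univ).preimage (triShift v).injective.injOn).subset fun T hT => ?_
  refine ⟨fun h => hT ?_, trivial⟩
  simp [show u (T.1 + v T.2) = 0 from h]

lemma finsum_inner_shift (F : Tri → E2) (v : Bool → ℤ × ℤ) :
    ∑ᶠ T : Tri, ⟪F T, u (T.1 + v T.2)⟫ = ∑ᶠ T : Tri, ⟪F (T.1 - v T.2, T.2), u T.1⟫ := by
  rw [← finsum_comp_equiv (triShift v) (f := fun T : Tri => ⟪F (T.1 - v T.2, T.2), u T.1⟫)]
  simp [triShift]

lemma finsum_inner_fst (F : Tri → E2) (hu : FinSupp u) :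
    ∑ᶠ T : Tri, ⟪F T, u T.1⟫ = ∑ᶠ x, ⟪∑ b, F (x, b), u x⟫ := by
  rw [finsum_curry _ (by simpa using hasFiniteSupport_inner_shift F 0 hu)]
  simp [finsum_eq_sum_of_fintype, inner_add_left]

theorem finsum_sum_inner_vertex {ι : Type*} [Fintype ι] (F : ι → Tri → E2)
    (v : ι → Bool → ℤ × ℤ) (hu : FinSupp u) :
    ∑ᶠ T : Tri, ∑ k, ⟪F k T, u (T.1 + v k T.2)⟫ = ∑ᶠ x, ⟪∑ k, ∑ b, F k (x - v k b, b), u x⟫ := by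
  rw [finsum_sum_comm _ _ fun k _ => hasFiniteSupport_inner_shift (F k) (v k) hu]
  simp_rw [finsum_inner_shift, finsum_inner_fst _ hu]
  rw [← finsum_sum_comm _ _ fun k _ => hu.subset <| Function.support_subset_iff'.2 fun x hx => by
    simp [Function.notMem_support.1 hx]]
  simp [sum_inner]

end SummationByParts

def nodalForce (σ : Tri → Mat2) (x : ℤ × ℤ) : E2 :=
  ∑ k, ∑ b, mvec (σ (x - vertexOffset k b, b)) (scaledHatGrad k b)

theorem finsum_area_mul_frobI_triGrad (σ : Tri → Mat2) {u : ℤ × ℤ → E2} (hu : FinSupp u) :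
    ∑ᶠ T : Tri, Om0 / 2 * frobI (σ T) (triGrad u T) = ∑ᶠ x, ⟪nodalForce σ x, u x⟫ := by
  simp_rw [area_mul_frobI_triGrad]
  exact finsum_sum_inner_vertex (fun k T => mvec (σ T) (scaledHatGrad k T.2)) vertexOffset hu

theorem forall_finsum_eq_zero_iff_nodalForce_eq_zero (σ : Tri → Mat2) :
    (∀ u : ℤ × ℤ → E2, FinSupp u → ∑ᶠ T : Tri, Om0 / 2 * frobI (σ T) (triGrad u T) = 0) ↔
      ∀ x, nodalForce σ x = 0 := by
  refine ⟨fun h x => ?_, fun h u hu => by simp [finsum_area_mul_frobI_triGrad σ hu, h]⟩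
  have hu : FinSupp (Pi.single x (nodalForce σ x)) :=
    (Set.finite_singleton x).subset Pi.support_single_subset
  have := h _ hu
  rw [finsum_area_mul_frobI_triGrad σ hu, finsum_eq_single _ x fun y hy => by simp [hy]] at this
  simpa using this

lemma sum_jump_mul_transpose_Jmat (σ : Tri → Mat2) (x : ℤ × ℤ) :
    ∑ j ∈ Finset.range 6, jump (fun T => σ T * Jmatᵀ) x j = -nodalForce σ x := by
  obtain ⟨x₁, x₂⟩ := x
  ext i
  simp [Finset.sum_range_succ, jump, nodalForce, vertexOffset, scaledHatGrad, Txj, edgeMid, emb,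
    mvec, toE2, Jmat, Matrix.mul_apply, Fin.sum_univ_two, Fin.sum_univ_three, avec_zero, avec_one,
    avec_two, avec_three, avec_four, avec_five, sub_eq_add_neg]
  ring

lemma eq_mul_Jmat_iff {σ G : Mat2} : σ = G * Jmat ↔ G = σ * Jmatᵀ := by
  have hJ : Jmat * Jmatᵀ = 1 := by
    ext i k; fin_cases i <;> fin_cases k <;> simp [Jmat, Matrix.mul_apply, Fin.sum_univ_two]
  have hJ' : Jmatᵀ * Jmat = 1 := by
    ext i k; fin_cases i <;> fin_cases k <;> simp [Jmat, Matrix.mul_apply, Fin.sum_univ_two]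
  constructor <;> rintro rfl
  · rw [Matrix.mul_assoc, hJ, Matrix.mul_one]
  · rw [Matrix.mul_assoc, hJ', Matrix.mul_one]

end AC

open AC in
/-- characterisation of divergence-free piecewise constant tensor fields
as rotated gradients of Crouzeix–Raviart fields (Lemma 4.5). -/
theorem divergence_free_characterisation (σ : Tri → Mat2) :
    (∀ u : ℤ × ℤ → E2, FinSupp u →
        ∑ᶠ T : Tri, Om0 / 2 * frobI (σ T) (triGrad u T) = 0) ↔
      ∃ (ψ : Tri → E2 → E2) (G : Tri → Mat2),
        affWith ψ G ∧ midCont ψ ∧ ∀ T : Tri, σ T = G T * Jmat := by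
  rw [forall_finsum_eq_zero_iff_nodalForce_eq_zero]
  calc (∀ x, nodalForce σ x = 0)
      ↔ ∀ x, ∑ j ∈ Finset.range 6, jump (fun T => σ T * Jmatᵀ) x j = 0 := by
        simp [sum_jump_mul_transpose_Jmat]
    _ ↔ ∃ ψ, affWith ψ (fun T => σ T * Jmatᵀ) ∧ midCont ψ :=
        ⟨exists_affWith_midCont_of_sum_jump_eq_zero _,
          fun ⟨_, hψ, hmid⟩ => sum_jump_eq_zero_of_midCont hψ hmid⟩
    _ ↔ _ := by simp [eq_mul_Jmat_iff, ← funext_iff]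
end
end

section
/- Let 𝒜 = {x ∈ ℒ : x₂ < 0}, ℐ = {x ∈ ℒ : x₂ = 0}, 𝒞 = {x ∈ ℒ : x₂ > 0} (a flat interface). There exists no choice of parameters (C_{x,j,i}), x ∈ ℐ, satisfying the one-sidedness condition, local energy consistency, and local force consistency, for which Σac(y_F;T) = Σa(y_F;T) holds for all T ∈ 𝒯, all F ∈ ℝ^{2×2}, and all V ∈ 𝒱. -/
open Real
open scoped BigOperators Classical ENNReal

noncomputable section

/-!
Test the stress identity with `V(g) = (g₁ - g₄)·e₁ ∈ 𝒱`. Its derivatives are constant,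
`∂_i V^ac_x ≡ w_x(i) e₁` with `w_x = (1,0,0,-1,0,0)` on `𝒜`, `w_x = (2,1,-1,-2,-1,1)/3` on `𝒞`
and `w_x(i) = C_{x,1,i} - C_{x,4,i}` on `ℐ`, while `Σa(y_F;T) = 2 e₁ ⊗ a₁ / Ω₀`; so
`Σac(y_F;T) = Σa(y_F;T)` says `Σ_j w_{x_{T,j}}(j) a_j = 2 a₁`. Write `p = w_0` and `q = w_{a₁}`.
On `conv{0, a₅, a₆}` this gives `p₆ = 0`; on `conv{0, a₁, a₆}` then `q₅ = 0` and `p₁ - q₄ = 2`;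
on `conv{0, a₁, a₂}` it gives `p₂ + q₃ = 0` and `p₁ + (p₂ - q₃)/2 - q₄ = 5/3`. Energy consistency
at `a₁` for `V(g) = (g₁)₂² + (g₄)₂²` together with one-sidedness forces `q₃ = q₅`, hence
`p₂ = q₃ = 0` and `p₁ - q₄ = 5/3`, a contradiction. (Indices as in the paper: `a_i` is
`aFam (i - 1)`.)
-/

namespace AC

lemma aFam_apply_zero (j : Fin 6) : aFam j 0 = ![1, 1/2, -(1/2), -1, -(1/2), 1/2] j := by
  fin_cases j <;> norm_num [aFam, avec, toE2, show 2 * (π / 3) = π - π / 3 by ring,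
    show 3 * (π / 3) = π by ring, show 4 * (π / 3) = π / 3 + π by ring,
    show 5 * (π / 3) = 2 * π - π / 3 by ring, cos_pi_sub, cos_two_pi_sub]

lemma aFam_apply_one (j : Fin 6) :
    aFam j 1 = ![0, √3/2, √3/2, 0, -(√3/2), -(√3/2)] j := by
  fin_cases j <;> norm_num [aFam, avec, toE2, show 2 * (π / 3) = π - π / 3 by ring,
    show 3 * (π / 3) = π by ring, show 4 * (π / 3) = π / 3 + π by ring,
    show 5 * (π / 3) = 2 * π - π / 3 by ring, sin_pi_sub, sin_two_pi_sub]

lemma avec_add_six (j : ℤ) : avec (j + 6) = avec j := by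
  have h : (((j + 6 : ℤ) : ℝ) - 1) * (π / 3) = ((j : ℝ) - 1) * (π / 3) + 2 * π := by
    push_cast; ring
  simp only [avec, h, cos_add_two_pi, sin_add_two_pi]

lemma avec_natCast_add_two (j : Fin 6) : avec ((j : ℕ) + 2) = aFam (j + 1) := by
  fin_cases j <;> first | rfl | exact avec_add_six 1

lemma emb_apply_one (x : ℤ × ℤ) : emb x 1 = x.2 * (√3 / 2) := by
  change x.1 * aFam 0 1 + x.2 * aFam 1 1 = _
  simp [aFam_apply_one]

lemma Famat_one : Famat 1 = aFam := by
  funext j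
  ext k
  fin_cases k <;> simp [Famat, mvec, toE2, Fin.sum_univ_two]

lemma unitv_apply_zero (j m : Fin 6) : unitv j 0 m 0 = if m = j then 1 else 0 := by
  by_cases h : m = j <;> simp [unitv, toE2, h]

lemma pd_apply_zero_of_eq_sum {V : (Fin 6 → E2) → ℝ} (w : Fin 6 → ℝ)
    (hV : ∀ g, V g = ∑ m, w m * g m 0) (j : Fin 6) (g : Fin 6 → E2) : pd V j g 0 = w j := by
  have hline : (fun t : ℝ => V (g + t • unitv j 0)) = fun t => V g + t * w j := by
    funext t
    simp only [hV, Pi.add_apply, Pi.smul_apply, PiLp.add_apply, PiLp.smul_apply, smul_eq_mul,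
      unitv_apply_zero, mul_ite, mul_one, mul_zero, mul_add, Finset.sum_add_distrib,
      Finset.sum_ite_eq', Finset.mem_univ, ↓reduceIte]
    ring
  show deriv (fun t : ℝ => V (g + t • unitv j 0)) 0 = w j
  rw [hline]
  simp

lemma Vc_eq_sum_Wf (V : (Fin 6 → E2) → ℝ) (g : Fin 6 → E2) :
    Vc V g = Om0 / 6 * ∑ j, Wf V (solve2 (aFam j) (aFam (j + 1)) (g j) (g (j + 1))) := by
  simp only [Vc, avec_natCast_add_two]; rfl

def linPot : (Fin 6 → E2) → ℝ := fun g => g 0 0 - g 3 0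

def quadPot : (Fin 6 → E2) → ℝ := fun g => g 0 1 ^ 2 + g 3 1 ^ 2

lemma contDiff_apply_apply (i : Fin 6) (k : Fin 2) :
    ContDiff ℝ 3 fun g : Fin 6 → E2 => g i k :=
  ((EuclideanSpace.proj k).comp
    (ContinuousLinearMap.proj (R := ℝ) (φ := fun _ : Fin 6 => E2) i)).contDiff

lemma memV_linPot : memV linPot := by
  refine ⟨(contDiff_apply_apply 0 0).sub (contDiff_apply_apply 3 0), fun g => ?_⟩
  simp [linPot, show (3 : Fin 6) + 3 = 0 from rfl]
  ring

lemma memV_quadPot : memV quadPot := by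
  refine ⟨((contDiff_apply_apply 0 1).pow 2).add ((contDiff_apply_apply 3 1).pow 2), fun g => ?_⟩
  simp [quadPot, show (3 : Fin 6) + 3 = 0 from rfl]
  ring

def atomWeight : Fin 6 → ℝ := ![1, 0, 0, -1, 0, 0]

def cbWeight : Fin 6 → ℝ := ![2/3, 1/3, -(1/3), -(2/3), -(1/3), 1/3]

def linWeight (Cp : Fin 6 → Fin 6 → ℝ) (i : Fin 6) : ℝ := Cp 0 i - Cp 3 i

lemma linPot_eq_sum (g : Fin 6 → E2) : linPot g = ∑ m, atomWeight m * g m 0 := by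
  simp [linPot, atomWeight, Fin.sum_univ_six]; ring

lemma Vi_linPot_eq_sum (Cp : Fin 6 → Fin 6 → ℝ) (g : Fin 6 → E2) :
    Vi linPot Cp g = ∑ m, linWeight Cp m * g m 0 := by
  simp [Vi, linPot, linWeight, sub_mul, Finset.sum_sub_distrib]

lemma Wf_linPot (F : Mat2) : Wf linPot F = 2 * F 0 0 / Om0 := by
  simp [Wf, linPot, Famat, mvec, toE2, Fin.sum_univ_two, aFam_apply_zero, aFam_apply_one]; ring

lemma Vc_linPot_eq_sum (g : Fin 6 → E2) : Vc linPot g = ∑ m, cbWeight m * g m 0 := by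
  simp [Vc_eq_sum_Wf, Wf_linPot, solve2, Fin.sum_univ_six, aFam_apply_zero, aFam_apply_one,
    cbWeight, Om0]
  field_simp
  ring

lemma Vi_quadPot (Cp : Fin 6 → Fin 6 → ℝ) (g : Fin 6 → E2) :
    Vi quadPot Cp g = (∑ m, Cp 0 m * g m 1) ^ 2 + (∑ m, Cp 3 m * g m 1) ^ 2 := by
  simp [Vi, quadPot]

lemma sum_mul_aFam_snd_eq_zero_of_Vi_quadPot {Cp : Fin 6 → Fin 6 → ℝ}
    (h : Vi quadPot Cp (Famat 1) = quadPot (Famat 1)) : ∑ m, Cp 3 m * aFam m 1 = 0 := by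
  have hzero : quadPot aFam = 0 := by simp [quadPot, aFam_apply_one]
  rw [Famat_one, Vi_quadPot, hzero] at h
  exact pow_eq_zero_iff two_ne_zero |>.1 <|
    ((add_eq_zero_iff_of_nonneg (sq_nonneg _) (sq_nonneg _)).1 h).2

lemma linWeight_two_eq_four {Cp : Fin 6 → Fin 6 → ℝ} (hOS : oneSided Cp)
    (hE : Vi quadPot Cp (Famat 1) = quadPot (Famat 1)) : linWeight Cp 2 = linWeight Cp 4 := by
  have h02 := hOS 0 2 (by decide) (by decide) (by decide)
  have h04 := hOS 0 4 (by decide) (by decide) (by decide)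
  have h34 : Cp 3 2 * (√3 / 2) = Cp 3 4 * (√3 / 2) := by
    have h := sum_mul_aFam_snd_eq_zero_of_Vi_quadPot hE
    simp [Fin.sum_univ_six, aFam_apply_one, hOS 3 1 (by decide) (by decide) (by decide),
      hOS 3 5 (by decide) (by decide) (by decide)] at h
    linarith
  rw [linWeight, linWeight, h02, h04, mul_right_cancel₀ (by positivity) h34]

lemma coord_eqs_of_sum_mul_aFam_eq_atomWeight {w : Fin 6 → ℝ}
    (h : ∀ k, ∑ j, w j * aFam j k = ∑ j, atomWeight j * aFam j k) :
    w 0 + (w 1 - w 2 - w 4 + w 5) / 2 - w 3 = 2 ∧ w 1 + w 2 = w 4 + w 5 := by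
  have h0 := h 0
  have h1 := h 1
  simp [Fin.sum_univ_six, aFam_apply_zero, aFam_apply_one, atomWeight] at h0 h1
  refine ⟨by linarith, ?_⟩
  have h : (w 1 + w 2) * (√3 / 2) = (w 4 + w 5) * (√3 / 2) := by linarith
  exact mul_right_cancel₀ (by positivity) h

lemma Sa_eq_Sac_univ (V : (Fin 6 → E2) → ℝ) (C : ℤ × ℤ → Fin 6 → Fin 6 → ℝ)
    (y : ℤ × ℤ → E2) (T : Tri) : Sa V y T = Sac V C Set.univ y T := by
  simp [Sa, Sac, Vac]

lemma mem_flatA {x : ℤ × ℤ} : x ∈ flatA ↔ x.2 < 0 := by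
  change emb x 1 < 0 ↔ _
  rw [emb_apply_one, ← zero_mul (√3 / 2), mul_lt_mul_iff_of_pos_right (by positivity),
    Int.cast_lt_zero]

lemma mem_interf_flatA {x : ℤ × ℤ} : x ∈ interf flatA ↔ x.2 = 0 := by
  simp only [interf, Set.mem_ofPred_eq, mem_flatA, not_lt]
  constructor
  · rintro ⟨hx, j, hj⟩
    fin_cases j <;> simp [ed] at hj <;> omega
  · exact fun hx => ⟨hx.ge, 4, by simp [ed, hx]⟩

/-- The weights `w_x` of the proof idea: `∂_i V^ac_x ≡ siteWeight C A x i • e₁` for `V = linPot`. -/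
def siteWeight (C : ℤ × ℤ → Fin 6 → Fin 6 → ℝ) (A : Set (ℤ × ℤ)) (x : ℤ × ℤ) : Fin 6 → ℝ :=
  if x ∈ A then atomWeight else if x ∈ interf A then linWeight (C x) else cbWeight

section

variable {C : ℤ × ℤ → Fin 6 → Fin 6 → ℝ} {A : Set (ℤ × ℤ)}

lemma Vac_linPot_eq_sum (x : ℤ × ℤ) (g : Fin 6 → E2) :
    Vac linPot C A x g = ∑ m, siteWeight C A x m * g m 0 := by
  unfold Vac siteWeight
  split_ifs
  · exact linPot_eq_sum g
  · exact Vi_linPot_eq_sum (C x) g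
  · exact Vc_linPot_eq_sum g

lemma siteWeight_univ (x : ℤ × ℤ) : siteWeight C Set.univ x = atomWeight :=
  if_pos trivial

lemma Sac_linPot_apply_zero (y : ℤ × ℤ → E2) (T : Tri) (k : Fin 2) :
    Sac linPot C A y T 0 k = Om0⁻¹ * ∑ j, siteWeight C A (xT T j) j * aFam j k := by
  simp [Sac, outer, Matrix.sum_apply, pd_apply_zero_of_eq_sum _ (Vac_linPot_eq_sum _)]

lemma sum_siteWeight_mul_aFam_eq_of_Sac_linPot_eq_Sa {y : ℤ × ℤ → E2} {T : Tri}
    (h : Sac linPot C A y T = Sa linPot y T) (k : Fin 2) :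
    ∑ j, siteWeight C A (xT T j) j * aFam j k = ∑ j, atomWeight j * aFam j k := by
  have hk := congrFun (congrFun h 0) k
  rw [Sa_eq_Sac_univ _ C, Sac_linPot_apply_zero, Sac_linPot_apply_zero] at hk
  simpa [siteWeight_univ, Om0] using hk

lemma siteWeight_flatA_of_snd_neg {x : ℤ × ℤ} (hx : x.2 < 0) :
    siteWeight C flatA x = atomWeight :=
  if_pos (mem_flatA.2 hx)

lemma siteWeight_flatA_of_snd_eq_zero {x : ℤ × ℤ} (hx : x.2 = 0) :
    siteWeight C flatA x = linWeight (C x) := by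
  rw [siteWeight, if_neg (by rw [mem_flatA]; omega), if_pos (mem_interf_flatA.2 hx)]

lemma siteWeight_flatA_of_snd_pos {x : ℤ × ℤ} (hx : 0 < x.2) :
    siteWeight C flatA x = cbWeight := by
  rw [siteWeight, if_neg (by rw [mem_flatA]; omega), if_neg (by rw [mem_interf_flatA]; omega)]

end

end AC

open AC in
/-- correctors are necessary — no patch test consistent choice of
parameters makes the a/c stress coincide with the atomistic stress under all
homogeneous deformations, for the flat interface (Remark 6.1). -/
theorem correctors_necessary :
    ¬ ∃ C : ℤ × ℤ → Fin 6 → Fin 6 → ℝ,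
        (∀ x ∈ interf flatA, oneSided (C x)) ∧
        (∀ V : (Fin 6 → E2) → ℝ, memV V → ∀ F : Mat2, ∀ x ∈ interf flatA,
          Vi V (C x) (Famat F) = V (Famat F)) ∧
        (∀ V : (Fin 6 → E2) → ℝ, memV V → ∀ F : Mat2, ∀ u : ℤ × ℤ → E2, FinSupp u →
          dEac V C flatA (yhom F) u = 0) ∧
        (∀ V : (Fin 6 → E2) → ℝ, memV V → ∀ F : Mat2, ∀ T : Tri,
          Sac V C flatA (yhom F) T = Sa V (yhom F) T) := by
  rintro ⟨C, hOS, hE, -, hS⟩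
  have balance := fun T => coord_eqs_of_sum_mul_aFam_eq_atomWeight
    (sum_siteWeight_mul_aFam_eq_of_Sac_linPot_eq_Sa (hS linPot memV_linPot 1 T))
  have hcorner := balance ((0, -1), true)
  have hbelow := balance ((0, 0), false)
  have habove := balance ((0, 0), true)
  simp [xT, siteWeight_flatA_of_snd_neg, siteWeight_flatA_of_snd_eq_zero,
    siteWeight_flatA_of_snd_pos, atomWeight, cbWeight] at hcorner hbelow habove
  have hq := linWeight_two_eq_four (hOS (1, 0) (mem_interf_flatA.2 rfl))
    (hE quadPot memV_quadPot 1 (1, 0) (mem_interf_flatA.2 rfl))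
  linarith
end
end
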